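/- arXiv:2512.15128 — 11 statements merged into one kernel-verified Lean document; each statement's English description precedes it below -/
import Mathlib

section
/- For all γ ∈ (0,1) and all b > 0, (γb/(γb+1))^γ ≥ b/(b+1). -/
/-! Bernoulli's inequality `(1 + x) ^ γ ≤ 1 + γ x` for `γ ∈ [0, 1]`, applied at `x = 1 / (γ b)` and
inverted, gives `(γb / (γb + 1)) ^ γ ≥ γb / (γb + γ) = b / (b + 1)`. -/

open Real

lemma div_add_le_rpow_div_add_one {a p : ℝ} (ha : 0 < a) (hp0 : 0 ≤ p) (hp1 : p ≤ 1) :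
    a / (a + p) ≤ (a / (a + 1)) ^ p := by
  have bernoulli : (1 + 1 / a) ^ p ≤ 1 + p * (1 / a) :=
    rpow_one_add_le_one_add_mul_self (by linarith [one_div_pos.mpr ha]) hp0 hp1
  have hinv : ((a + 1) / a) ^ p ≤ (a + p) / a := by
    convert bernoulli using 1 <;> field_simp
  calc a / (a + p) = ((a + p) / a)⁻¹ := (inv_div _ _).symm
    _ ≤ (((a + 1) / a) ^ p)⁻¹ := inv_anti₀ (by positivity) hinv
    _ = (a / (a + 1)) ^ p := by rw [← inv_rpow (by positivity), inv_div]

theorem pgss_key_inequality (γ b : ℝ) (hγ0 : 0 < γ) (hγ1 : γ < 1) (hb : 0 < b) :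
    (γ * b / (γ * b + 1)) ^ γ ≥ b / (b + 1) := by
  have hrewrite : b / (b + 1) = γ * b / (γ * b + γ) := by
    rw [show γ * b + γ = γ * (b + 1) by ring, mul_div_mul_left _ _ hγ0.ne']
  rw [ge_iff_le, hrewrite]
  exact div_add_le_rpow_div_add_one (mul_pos hγ0 hb) hγ0.le hγ1.le
end

section
/- Let γ ∈ (0,1) and define p_t(b) for b > 0 by p₁(b) = (γb/(γb+1))^γ and p_t(b) = [ p_{t-1}(γb+1) · γb / (γb + 1 - p_{t-1}(γb+1)) ]^γ. Then for each fixed t ≥ 1, the function b ↦ p_t(b) is (strictly) monotone increasing on (0, ∞). -/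
/-! Write `c = γ b`. Then `p₁(b) = (c / (c + 1))^γ`, and `p_{t+1}(b) = (q c / (c + 1 - q))^γ` with
`q = p_t(c + 1) ∈ (0, 1)`. The map `(q, c) ↦ q c / (c + 1 - q)` is strictly increasing in both
variables on `(0, 1) × (0, ∞)`, and by induction on `t` so is `q = p_t(c + 1)` as a function of `c`. -/

open Set

lemma div_add_one_lt_div_add_one {c₁ c₂ : ℝ} (hc₁ : -1 < c₁) (hc : c₁ < c₂) :
    c₁ / (c₁ + 1) < c₂ / (c₂ + 1) := by
  rw [div_lt_div_iff₀ (by linarith) (by linarith)]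
  linarith

lemma mul_div_add_one_sub_lt {q₁ q₂ c₁ c₂ : ℝ} (hq₁ : 0 < q₁) (hq : q₁ < q₂) (hq₂ : q₂ < 1)
    (hc₁ : 0 < c₁) (hc : c₁ < c₂) :
    q₁ * c₁ / (c₁ + 1 - q₁) < q₂ * c₂ / (c₂ + 1 - q₂) := by
  rw [div_lt_div_iff₀ (by linarith) (by linarith)]
  nlinarith [mul_pos (mul_pos (sub_pos.mpr hc) (hq₁.trans hq)) (sub_pos.mpr (hq.trans hq₂)),
    mul_pos (mul_pos (sub_pos.mpr hq) hc₁) (show 0 < c₂ + 1 by linarith)]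

theorem pgss_p_mono_in_b_general (γ : ℝ) (hγ0 : 0 < γ)
    (p : ℕ → ℝ → ℝ)
    (h1 : ∀ b : ℝ, 0 < b → p 1 b = (γ * b / (γ * b + 1)) ^ γ)
    (hrec : ∀ t : ℕ, 1 ≤ t → ∀ b : ℝ, 0 < b →
      p (t + 1) b = (p t (γ * b + 1) * (γ * b) / (γ * b + 1 - p t (γ * b + 1))) ^ γ)
    (hbound : ∀ t : ℕ, 1 ≤ t → ∀ b : ℝ, 0 < b → 0 < p t b ∧ p t b < 1) :
    ∀ t : ℕ, 1 ≤ t → StrictMonoOn (fun b => p t b) (Set.Ioi (0 : ℝ)) := by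
  intro t ht
  induction t, ht using Nat.le_induction with
  | base =>
    intro b₁ (hb₁ : 0 < b₁) b₂ (hb₂ : 0 < b₂) hb
    have hc₁ : 0 < γ * b₁ := mul_pos hγ0 hb₁
    simp only [h1 b₁ hb₁, h1 b₂ hb₂]
    exact Real.rpow_lt_rpow (by positivity)
      (div_add_one_lt_div_add_one (by linarith) (mul_lt_mul_of_pos_left hb hγ0)) hγ0
  | succ t ht ih =>
    intro b₁ (hb₁ : 0 < b₁) b₂ (hb₂ : 0 < b₂) hb
    have hc₁ : 0 < γ * b₁ := mul_pos hγ0 hb₁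
    have hc : γ * b₁ < γ * b₂ := mul_lt_mul_of_pos_left hb hγ0
    obtain ⟨hq₁, -⟩ := hbound t ht (γ * b₁ + 1) (by linarith)
    obtain ⟨-, hq₂⟩ := hbound t ht (γ * b₂ + 1) (by linarith)
    have hq : p t (γ * b₁ + 1) < p t (γ * b₂ + 1) :=
      ih (show (0 : ℝ) < γ * b₁ + 1 by linarith) (show (0 : ℝ) < γ * b₂ + 1 by linarith)
        (by linarith)
    simp only [hrec t ht b₁ hb₁, hrec t ht b₂ hb₂]
    exact Real.rpow_lt_rpow (div_nonneg (by positivity) (by linarith))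
      (mul_div_add_one_sub_lt hq₁ hq hq₂ hc₁ hc) hγ0

theorem pgss_p_mono_in_b (γ : ℝ) (hγ0 : 0 < γ) (hγ1 : γ < 1)
    (p : ℕ → ℝ → ℝ)
    (h1 : ∀ b : ℝ, 0 < b → p 1 b = (γ * b / (γ * b + 1)) ^ γ)
    (hrec : ∀ t : ℕ, 1 ≤ t → ∀ b : ℝ, 0 < b →
      p (t + 1) b = (p t (γ * b + 1) * (γ * b) / (γ * b + 1 - p t (γ * b + 1))) ^ γ)
    (hbound : ∀ t : ℕ, 1 ≤ t → ∀ b : ℝ, 0 < b → 0 < p t b ∧ p t b < 1) :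
    ∀ t : ℕ, 1 ≤ t → StrictMonoOn (fun b => p t b) (Set.Ioi (0 : ℝ)) :=
  pgss_p_mono_in_b_general γ hγ0 p h1 hrec hbound
end

section
/- Let γ ∈ (0,1) and define p_t(b) by p₁(b) = (γb/(γb+1))^γ and p_t(b) = [ p_{t-1}(γb+1) · γb / (γb + 1 - p_{t-1}(γb+1)) ]^γ. Then p₂(b) ≥ p₁(b) for every b > 0. -/
/-!
Put `x = γb` and `q = p₁(x + 1)`. Since `t ↦ t^γ` is increasing, `p₂(b) ≥ p₁(b)` reduces to
`q x / (x + 1 - q) ≥ x / (x + 1)`, i.e. to `q ≥ (x + 1)/(x + 2)`. This is the inequality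
`(γc/(γc+1))^γ ≥ c/(c+1)` at `c = x + 1`, which is Bernoulli's inequality
`(1 + 1/(γc))^γ ≤ 1 + 1/c` in disguise.
-/

open Real

theorem div_add_one_le_rpow_mul_div {γ c : ℝ} (hγ0 : 0 < γ) (hγ1 : γ ≤ 1) (hc : 0 < c) :
    c / (c + 1) ≤ (γ * c / (γ * c + 1)) ^ γ := by
  have hu : 0 < γ * c := by positivity
  have hbernoulli : (1 + 1 / (γ * c)) ^ γ ≤ 1 + γ * (1 / (γ * c)) :=
    rpow_one_add_le_one_add_mul_self (by linarith [one_div_pos.2 hu]) hγ0.le hγ1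
  calc c / (c + 1) = (1 + γ * (1 / (γ * c)))⁻¹ := by field_simp
    _ ≤ ((1 + 1 / (γ * c)) ^ γ)⁻¹ := inv_anti₀ (by positivity) hbernoulli
    _ = (γ * c / (γ * c + 1)) ^ γ := by
      rw [← inv_rpow (by positivity)]
      congr 1
      field_simp

theorem div_add_one_le_mul_div_sub {x q : ℝ} (hx : 0 < x) (hq : q < x + 1)
    (hq_ge : (x + 1) / (x + 2) ≤ q) :
    x / (x + 1) ≤ q * x / (x + 1 - q) := by
  have hq_ge' : x + 1 ≤ q * (x + 2) := (div_le_iff₀ (by linarith)).1 hq_ge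
  rw [div_le_div_iff₀ (by linarith) (by linarith)]
  nlinarith

theorem pgss_p2_ge_p1 (γ : ℝ) (hγ0 : 0 < γ) (hγ1 : γ < 1)
    (p : ℕ → ℝ → ℝ)
    (h1 : ∀ b : ℝ, 0 < b → p 1 b = (γ * b / (γ * b + 1)) ^ γ)
    (hrec : ∀ t : ℕ, 1 ≤ t → ∀ b : ℝ, 0 < b →
      p (t + 1) b = (p t (γ * b + 1) * (γ * b) / (γ * b + 1 - p t (γ * b + 1))) ^ γ) :
    ∀ b : ℝ, 0 < b → p 2 b ≥ p 1 b := by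
  intro b hb
  have hx : 0 < γ * b := by positivity
  have hq : p 1 (γ * b + 1) = (γ * (γ * b + 1) / (γ * (γ * b + 1) + 1)) ^ γ :=
    h1 _ (by positivity)
  have hq_le_one : p 1 (γ * b + 1) ≤ 1 := by
    rw [hq]
    exact rpow_le_one (by positivity) ((div_le_one (by positivity)).2 (by linarith)) hγ0.le
  have hq_ge : (γ * b + 1) / (γ * b + 2) ≤ p 1 (γ * b + 1) := by
    rw [hq, show γ * b + 2 = γ * b + 1 + 1 by ring]
    exact div_add_one_le_rpow_mul_div hγ0 hγ1.le (by positivity)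
  rw [hrec 1 le_rfl b hb, h1 b hb, ge_iff_le]
  exact rpow_le_rpow (by positivity)
    (div_add_one_le_mul_div_sub hx (by linarith) hq_ge) hγ0.le
end

section
/- Let γ ∈ (0,1) and define p_t(b) by p₁(b) = (γb/(γb+1))^γ and p_t(b) = [ p_{t-1}(γb+1) · γb / (γb + 1 - p_{t-1}(γb+1)) ]^γ. Then for every fixed b > 0 the sequence t ↦ p_t(b) is monotone nondecreasing. -/
/-!
Writing `m = γ b`, the recurrence reads `p_{t+1}(b) = φ_m(p_t(m + 1))^γ` with
`φ_m(q) = q m / (m + 1 - q)`, which maps `(0, 1)` into itself and is increasing there. Hence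
`p_t ≤ p_{t+1}` at the point `m + 1` propagates to the point `b`, and monotonicity in `t`
follows by induction from the case `t = 1`. That case holds because
`φ_m((m + 1)/(m + 2)) = m/(m + 1)`, while Bernoulli's inequality gives
`p_1(m + 1) ≥ (m + 1)/(m + 2)`.
-/

open Real Set

noncomputable section

namespace Pgss

def step (m q : ℝ) : ℝ := q * m / (m + 1 - q)

lemma step_mem_Ioo {m q : ℝ} (hm : 0 < m) (hq : q ∈ Ioo 0 1) : step m q ∈ Ioo 0 1 := by
  obtain ⟨hq0, hq1⟩ := hq
  have hden : 0 < m + 1 - q := by linarith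
  refine ⟨by unfold step; positivity, ?_⟩
  rw [step, div_lt_one hden]
  nlinarith

lemma step_le_step {m q₁ q₂ : ℝ} (hm : 0 < m) (hq : q₁ ≤ q₂) (hq₂ : q₂ < m + 1) :
    step m q₁ ≤ step m q₂ := by
  rw [step, step, div_le_div_iff₀ (by linarith) (by linarith)]
  nlinarith [mul_le_mul_of_nonneg_left hq (by positivity : 0 ≤ m * (m + 1))]

lemma step_div_add_two {m : ℝ} (hm : 0 < m) : step m ((m + 1) / (m + 2)) = m / (m + 1) := by
  have hden : m + 1 - (m + 1) / (m + 2) = (m + 1) * (m + 1) / (m + 2) := by field_simp; ring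
  rw [step, hden]
  field_simp

lemma rpow_mem_Ioo {x γ : ℝ} (hx : x ∈ Ioo 0 1) (hγ : 0 < γ) : x ^ γ ∈ Ioo 0 1 :=
  ⟨rpow_pos_of_pos hx.1 γ, rpow_lt_one hx.1.le hx.2 hγ⟩

lemma div_add_one_le_rpow {γ c : ℝ} (hγ0 : 0 < γ) (hγ1 : γ ≤ 1) (hc : 0 < c) :
    c / (c + 1) ≤ (γ * c / (γ * c + 1)) ^ γ := by
  have hγc : 0 < γ * c := mul_pos hγ0 hc
  have hbernoulli : (1 + (γ * c)⁻¹) ^ γ ≤ 1 + γ * (γ * c)⁻¹ :=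
    rpow_one_add_le_one_add_mul_self (by linarith [inv_pos.mpr hγc]) hγ0.le hγ1
  calc c / (c + 1) = (1 + γ * (γ * c)⁻¹)⁻¹ := by field_simp
    _ ≤ ((1 + (γ * c)⁻¹) ^ γ)⁻¹ := inv_anti₀ (by positivity) hbernoulli
    _ = (γ * c / (γ * c + 1)) ^ γ := by
      rw [← inv_rpow (by positivity)]
      congr 1
      field_simp

section Recurrence

variable {γ : ℝ} {p : ℕ → ℝ → ℝ}

lemma mem_Ioo_of_rec (hγ0 : 0 < γ)
    (h1 : ∀ b : ℝ, 0 < b → p 1 b = (γ * b / (γ * b + 1)) ^ γ)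
    (hrec : ∀ t : ℕ, 1 ≤ t → ∀ b : ℝ, 0 < b → p (t + 1) b = step (γ * b) (p t (γ * b + 1)) ^ γ)
    {t : ℕ} (ht : 1 ≤ t) : ∀ b : ℝ, 0 < b → p t b ∈ Ioo 0 1 := by
  induction t, ht using Nat.le_induction with
  | base =>
    intro b hb
    have hm : 0 < γ * b := mul_pos hγ0 hb
    rw [h1 b hb]
    exact rpow_mem_Ioo ⟨by positivity, (div_lt_one (by linarith)).mpr (by linarith)⟩ hγ0
  | succ t ht ih =>
    intro b hb
    have hm : 0 < γ * b := mul_pos hγ0 hb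
    rw [hrec t ht b hb]
    exact rpow_mem_Ioo (step_mem_Ioo hm (ih _ (by linarith))) hγ0

lemma le_succ_of_rec (hγ0 : 0 < γ) (hγ1 : γ ≤ 1)
    (h1 : ∀ b : ℝ, 0 < b → p 1 b = (γ * b / (γ * b + 1)) ^ γ)
    (hrec : ∀ t : ℕ, 1 ≤ t → ∀ b : ℝ, 0 < b → p (t + 1) b = step (γ * b) (p t (γ * b + 1)) ^ γ)
    {t : ℕ} (ht : 1 ≤ t) : ∀ b : ℝ, 0 < b → p t b ≤ p (t + 1) b := by
  have hbound := fun t (ht : 1 ≤ t) => mem_Ioo_of_rec hγ0 h1 hrec ht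
  induction t, ht using Nat.le_induction with
  | base =>
    intro b hb
    set m := γ * b
    have hm : 0 < m := mul_pos hγ0 hb
    have hp₁ : (m + 1) / (m + 2) ≤ p 1 (m + 1) := by
      rw [h1 _ (by linarith)]
      convert div_add_one_le_rpow hγ0 hγ1 (show 0 < m + 1 by linarith) using 2
      ring
    rw [h1 b hb, hrec 1 le_rfl b hb, ← step_div_add_two hm]
    gcongr
    · exact (step_mem_Ioo hm ⟨by positivity, by rw [div_lt_one] <;> linarith⟩).1.le
    · exact step_le_step hm hp₁ (by linarith [(hbound 1 le_rfl (m + 1) (by linarith)).2])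
  | succ t ht ih =>
    intro b hb
    have hm : 0 < γ * b := mul_pos hγ0 hb
    have hc : 0 < γ * b + 1 := by linarith
    rw [hrec t ht b hb, hrec (t + 1) (by omega) b hb]
    gcongr
    · exact (step_mem_Ioo hm (hbound t ht _ hc)).1.le
    · exact step_le_step hm (ih _ hc) (by linarith [(hbound (t + 1) (by omega) _ hc).2])

end Recurrence

end Pgss

end

theorem pgss_p_mono_in_t_general (γ : ℝ) (hγ0 : 0 < γ) (hγ1 : γ < 1)
    (p : ℕ → ℝ → ℝ)
    (h1 : ∀ b : ℝ, 0 < b → p 1 b = (γ * b / (γ * b + 1)) ^ γ)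
    (hrec : ∀ t : ℕ, 1 ≤ t → ∀ b : ℝ, 0 < b →
      p (t + 1) b = (p t (γ * b + 1) * (γ * b) / (γ * b + 1 - p t (γ * b + 1))) ^ γ) :
    ∀ b : ℝ, 0 < b → ∀ t : ℕ, 1 ≤ t → p t b ≤ p (t + 1) b :=
  fun b hb _ ht => Pgss.le_succ_of_rec hγ0 hγ1.le h1 hrec ht b hb

theorem pgss_p_mono_in_t (γ : ℝ) (hγ0 : 0 < γ) (hγ1 : γ < 1)
    (p : ℕ → ℝ → ℝ)
    (h1 : ∀ b : ℝ, 0 < b → p 1 b = (γ * b / (γ * b + 1)) ^ γ)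
    (hrec : ∀ t : ℕ, 1 ≤ t → ∀ b : ℝ, 0 < b →
      p (t + 1) b = (p t (γ * b + 1) * (γ * b) / (γ * b + 1 - p t (γ * b + 1))) ^ γ)
    (hbound : ∀ t : ℕ, 1 ≤ t → ∀ b : ℝ, 0 < b → 0 < p t b ∧ p t b < 1) :
    ∀ b : ℝ, 0 < b → ∀ t : ℕ, 1 ≤ t → p t b ≤ p (t + 1) b :=
  pgss_p_mono_in_t_general γ hγ0 hγ1 p h1 hrec
end

section
/- Let γ ∈ (0,1), b* = 1/(1-γ), and define p_t = p_t(b*) by p₁ = γ^γ and p_t = [ p_{t-1} · γb* / (γb* + 1 - p_{t-1}) ]^γ (note γb* + 1 = b* since b* is the fixed point). Then p_t ≥ γ^{γ(1-γ^t)/(1-γ)} ≥ γ^{γ/(1-γ)} > 0 for all t ≥ 1. -/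
/-! Write `b = γ b* = γ / (1 - γ)`, so that `b / (b + 1) = γ`. For `0 ≤ x ≤ 1` the inner ratio
`x b / (b + 1 - x)` lies between `x b / (b + 1) = γ x` and `x`. Hence `p_t` stays in `(0, 1]`, and
`p_{t+1} ≥ (γ p_t)^γ`. The bound `L_t = γ^{γ(1-γ^t)/(1-γ)}` satisfies `L_1 = γ^γ` and
`L_{t+1} = (γ L_t)^γ` exactly, so `p_t ≥ L_t` by induction; finally `L_t ≥ γ^{γ/(1-γ)}`
because `γ < 1` and the exponent increases to `γ/(1-γ)`. -/

open Real

lemma mul_div_add_one_sub_le_self {b x : ℝ} (hb : 0 < b) (hx0 : 0 ≤ x) (hx1 : x ≤ 1) :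
    x * b / (b + 1 - x) ≤ x := by
  rw [div_le_iff₀ (by linarith)]
  nlinarith

lemma mul_div_add_one_le_mul_div_add_one_sub {b x : ℝ} (hb : 0 < b) (hx0 : 0 ≤ x)
    (hx1 : x ≤ 1) : x * b / (b + 1) ≤ x * b / (b + 1 - x) :=
  div_le_div_of_nonneg_left (by positivity) (by linarith) (by linarith)

lemma div_one_sub_div_add_one {γ : ℝ} (hγ : γ ≠ 1) :
    γ * (1 / (1 - γ)) / (γ * (1 / (1 - γ)) + 1) = γ := by
  have : 1 - γ ≠ 0 := sub_ne_zero.2 hγ.symm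
  field_simp
  ring

section

variable {γ : ℝ} (hγ0 : 0 < γ) (hγ1 : γ < 1)
include hγ0 hγ1

lemma mul_le_pgss_ratio {x : ℝ} (hx0 : 0 ≤ x) (hx1 : x ≤ 1) :
    γ * x ≤ x * (γ * (1 / (1 - γ))) / (γ * (1 / (1 - γ)) + 1 - x) := by
  have hb : 0 < γ * (1 / (1 - γ)) := mul_pos hγ0 (one_div_pos.2 (by linarith))
  calc γ * x = x * (γ * (1 / (1 - γ))) / (γ * (1 / (1 - γ)) + 1) := by
        rw [mul_div_assoc, div_one_sub_div_add_one hγ1.ne, mul_comm]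
    _ ≤ _ := mul_div_add_one_le_mul_div_add_one_sub hb hx0 hx1

lemma rpow_geom_exponent_succ (t : ℕ) :
    γ ^ (γ * (1 - γ ^ (t + 1)) / (1 - γ)) = (γ * γ ^ (γ * (1 - γ ^ t) / (1 - γ))) ^ γ := by
  have : 1 - γ ≠ 0 := by linarith
  have hγ_mul : ∀ e : ℝ, γ * γ ^ e = γ ^ (1 + e) := fun e => by rw [rpow_add hγ0, rpow_one]
  rw [hγ_mul, ← rpow_mul hγ0.le]
  congr 1
  field_simp
  ring

lemma rpow_div_one_sub_le_rpow_geom_exponent (t : ℕ) :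
    γ ^ (γ / (1 - γ)) ≤ γ ^ (γ * (1 - γ ^ t) / (1 - γ)) := by
  apply rpow_le_rpow_of_exponent_ge hγ0 hγ1.le
  have : 0 ≤ γ * γ ^ t := by positivity
  gcongr
  nlinarith

lemma rpow_geom_exponent_le_and_le_one_of_pgss_rec {p : ℕ → ℝ} (h1 : p 1 = γ ^ γ)
    (hrec : ∀ t : ℕ, 1 ≤ t →
      p (t + 1) = (p t * (γ * (1 / (1 - γ))) / (γ * (1 / (1 - γ)) + 1 - p t)) ^ γ)
    {t : ℕ} (ht : 1 ≤ t) : γ ^ (γ * (1 - γ ^ t) / (1 - γ)) ≤ p t ∧ p t ≤ 1 := by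
  induction t, ht using Nat.le_induction with
  | base =>
    have : γ * (1 - γ ^ 1) / (1 - γ) = γ := by
      field_simp [show 1 - γ ≠ 0 by linarith]
    rw [h1, this]
    exact ⟨le_rfl, rpow_le_one hγ0.le hγ1.le hγ0.le⟩
  | succ t ht ih =>
    obtain ⟨hlow, hle⟩ := ih
    have hp0 : 0 ≤ p t := (rpow_nonneg hγ0.le _).trans hlow
    have hb : 0 < γ * (1 / (1 - γ)) := mul_pos hγ0 (one_div_pos.2 (by linarith))
    rw [hrec t ht, rpow_geom_exponent_succ hγ0 hγ1]
    constructor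
    · gcongr
      exact (mul_le_mul_of_nonneg_left hlow hγ0.le).trans (mul_le_pgss_ratio hγ0 hγ1 hp0 hle)
    · exact rpow_le_one (div_nonneg (by positivity) (by linarith))
        ((mul_div_add_one_sub_le_self hb hp0 hle).trans hle) hγ0.le

end

theorem pgss_p_lower_bound (γ : ℝ) (hγ0 : 0 < γ) (hγ1 : γ < 1)
    (p : ℕ → ℝ)
    (h1 : p 1 = γ ^ γ)
    (hrec : ∀ t : ℕ, 1 ≤ t →
      p (t + 1) = (p t * (γ * (1 / (1 - γ))) / (γ * (1 / (1 - γ)) + 1 - p t)) ^ γ) :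
    ∀ t : ℕ, 1 ≤ t →
      p t ≥ γ ^ (γ * (1 - γ ^ t) / (1 - γ)) ∧
      γ ^ (γ * (1 - γ ^ t) / (1 - γ)) ≥ γ ^ (γ / (1 - γ)) ∧
      (0 : ℝ) < γ ^ (γ / (1 - γ)) := fun t ht =>
  ⟨(rpow_geom_exponent_le_and_le_one_of_pgss_rec hγ0 hγ1 h1 hrec ht).1,
    rpow_div_one_sub_le_rpow_geom_exponent hγ0 hγ1 t, rpow_pos_of_pos hγ0 _⟩
end

section
/- Let γ ∈ (0,1) and b* = 1/(1-γ). The equation [ p · γb* / (γb* + 1 - p) ]^γ = p, for p in the interval [c, 1] with c = γ^{γ/(1-γ)}, has p = 1 as its unique solution; moreover for p ∈ [c, 1) the left-hand side is strictly larger than p. -/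
/-
With b = γ/(1-γ) and t = 1/b, one has 1/γ = 1 + t, so after raising both sides to the power 1/γ
the inequality p < (p b / (b + 1 - p))^γ becomes p^t (1 + t(1 - p)) < 1. This holds for every
p ∈ (0,1): p^t < exp(t(p - 1)) because log p < p - 1, and 1 + t(1 - p) ≤ exp(t(1 - p)).
Hence the map has no fixed point in (0,1), and p = 1 is fixed.
-/

open Real

lemma rpow_mul_one_add_mul_one_sub_lt_one {p t : ℝ} (hp0 : 0 < p) (hp1 : p < 1) (ht : 0 < t) :
    p ^ t * (1 + t * (1 - p)) < 1 := by
  have hpow : p ^ t < exp (t * (p - 1)) := by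
    rw [rpow_def_of_pos hp0, exp_lt_exp, mul_comm]
    exact mul_lt_mul_of_pos_left (log_lt_sub_one_of_pos hp0 hp1.ne) ht
  have hlin : 1 + t * (1 - p) ≤ exp (t * (1 - p)) := by
    linarith [add_one_le_exp (t * (1 - p))]
  calc p ^ t * (1 + t * (1 - p)) < exp (t * (p - 1)) * exp (t * (1 - p)) :=
        mul_lt_mul hpow hlin (by nlinarith) (exp_pos _).le
    _ = 1 := by rw [← exp_add, ← exp_zero]; ring_nf

lemma lt_rpow_mul_div_add_one_sub {γ b p : ℝ} (hγ0 : 0 < γ) (hγ1 : γ < 1)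
    (hb : b * (1 - γ) = γ) (hp0 : 0 < p) (hp1 : p < 1) :
    p < (p * b / (b + 1 - p)) ^ γ := by
  have hb0 : 0 < b := pos_of_mul_pos_left (hb ▸ hγ0) (by linarith)
  have hden : 0 < b + 1 - p := by linarith
  have hinv : γ⁻¹ = 1 + b⁻¹ := by field_simp; linarith
  have key := rpow_mul_one_add_mul_one_sub_lt_one hp0 hp1 (inv_pos.2 hb0)
  rw [← rpow_inv_lt_iff_of_pos hp0.le (by positivity) hγ0, hinv, rpow_add hp0, rpow_one,
    lt_div_iff₀ hden]
  have : p ^ b⁻¹ * (b + 1 - p) < b := by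
    calc p ^ b⁻¹ * (b + 1 - p) = b * (p ^ b⁻¹ * (1 + b⁻¹ * (1 - p))) := by
          field_simp; ring
      _ < b * 1 := mul_lt_mul_of_pos_left key hb0
      _ = b := mul_one b
  rw [mul_assoc]
  exact mul_lt_mul_of_pos_left this hp0

theorem pgss_fixed_point_unique (γ : ℝ) (hγ0 : 0 < γ) (hγ1 : γ < 1) :
    (∀ p : ℝ, p ∈ Set.Icc (γ ^ (γ / (1 - γ))) 1 →
      ((p * (γ * (1 / (1 - γ))) / (γ * (1 / (1 - γ)) + 1 - p)) ^ γ = p ↔ p = 1)) ∧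
    (∀ p : ℝ, p ∈ Set.Ico (γ ^ (γ / (1 - γ))) 1 →
      (p * (γ * (1 / (1 - γ))) / (γ * (1 / (1 - γ)) + 1 - p)) ^ γ > p) := by
  have hb : γ * (1 / (1 - γ)) * (1 - γ) = γ := by field_simp [(sub_pos.2 hγ1).ne']
  have hc : 0 < γ ^ (γ / (1 - γ)) := rpow_pos_of_pos hγ0 _
  have strict : ∀ p ∈ Set.Ico (γ ^ (γ / (1 - γ))) 1,
      (p * (γ * (1 / (1 - γ))) / (γ * (1 / (1 - γ)) + 1 - p)) ^ γ > p :=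
    fun p hp => lt_rpow_mul_div_add_one_sub hγ0 hγ1 hb (hc.trans_le hp.1) hp.2
  refine ⟨fun p hp => ⟨fun hfix => ?_, ?_⟩, strict⟩
  · by_contra hne
    exact (strict p ⟨hp.1, hp.2.lt_of_ne hne⟩).ne' hfix
  · rintro rfl
    have hb0 : γ * (1 / (1 - γ)) ≠ 0 := by
      have := sub_pos.2 hγ1
      positivity
    rw [one_mul, add_sub_cancel_right, div_self hb0, one_rpow]
end

section
/- Let γ ∈ (0,1), b* = 1/(1-γ), and define p_t by p₁ = γ^γ and p_t = [ p_{t-1} · γb* / (γb* + 1 - p_{t-1}) ]^γ. Then p_t → 1 as t → ∞. -/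
/-!
The recurrence is `p ↦ f p` with `f x = (x c / (c + 1 - x)) ^ γ` and `c = γ / (1 - γ)`. The map `f`
sends `(0, 1)` into itself and satisfies `x < f x` there: in logarithms this is
`(1 - γ) log x < -γ log (1 + (1 - x) / c)`, which follows from `log x < x - 1`,
`log (1 + y) ≤ y` and `γ ≤ c (1 - γ)`. Hence `p` increases to a limit in `(0, 1]`, which is a
fixed point of the continuous map `f`, so it cannot lie below `1`.
-/

open Real Filter Set Topology

theorem tendsto_right_endpoint_of_lt_map {f : ℝ → ℝ} {a b : ℝ}
    (hmaps : MapsTo f (Ioo a b) (Ioo a b)) (hlt : ∀ x ∈ Ioo a b, x < f x)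
    (hf : ContinuousOn f (Ioo a b)) {u : ℕ → ℝ} (hu0 : u 0 ∈ Ioo a b)
    (hu : ∀ n, u (n + 1) = f (u n)) : Tendsto u atTop (𝓝 b) := by
  have hmem : ∀ n, u n ∈ Ioo a b := by
    intro n
    induction n with
    | zero => exact hu0
    | succ n ih => exact hu n ▸ hmaps ih
  have hmono : Monotone u :=
    monotone_nat_of_le_succ fun n => (hu n ▸ hlt _ (hmem n)).le
  have hbdd : BddAbove (range u) := ⟨b, forall_mem_range.2 fun n => (hmem n).2.le⟩
  have hlim : Tendsto u atTop (𝓝 (⨆ n, u n)) := tendsto_atTop_ciSup hmono hbdd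
  set L := ⨆ n, u n
  have hL_le : L ≤ b := ciSup_le fun n => (hmem n).2.le
  have ha_lt : a < L := (hmem 0).1.trans_le (le_ciSup hbdd 0)
  rcases hL_le.lt_or_eq with hL_lt | rfl
  · have hL : L ∈ Ioo a b := ⟨ha_lt, hL_lt⟩
    have hfix : f L = L := by
      refine tendsto_nhds_unique ?_ (hlim.comp (tendsto_add_atTop_nat 1))
      simp only [Function.comp_def, hu]
      exact ((hf.continuousAt (isOpen_Ioo.mem_nhds hL)).tendsto).comp hlim
    exact absurd (hlt L hL) (hfix.le.not_gt)
  · exact hlim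

/-- The paper's recurrence map with `c = γ b*`. -/
noncomputable def pgssMap (γ c x : ℝ) : ℝ := (x * c / (c + 1 - x)) ^ γ

section pgssMap

variable {γ c x : ℝ}

theorem pgssMap_mem_Ioo (hγ : 0 < γ) (hc : 0 < c) (hx : x ∈ Ioo 0 1) :
    pgssMap γ c x ∈ Ioo 0 1 := by
  obtain ⟨hx0, hx1⟩ := hx
  have hd : 0 < c + 1 - x := by linarith
  have hpos : 0 < x * c / (c + 1 - x) := by positivity
  have hlt : x * c / (c + 1 - x) < 1 := by
    rw [div_lt_one hd]
    nlinarith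
  exact ⟨rpow_pos_of_pos hpos γ, rpow_lt_one hpos.le hlt hγ⟩

theorem lt_pgssMap (hγ0 : 0 < γ) (hγ1 : γ < 1) (hc : γ ≤ c * (1 - γ)) (hx : x ∈ Ioo 0 1) :
    x < pgssMap γ c x := by
  obtain ⟨hx0, hx1⟩ := hx
  have hc0 : 0 < c := pos_of_mul_pos_left (hγ0.trans_le hc) (by linarith)
  have hd : 0 < (c + 1 - x) / c := div_pos (by linarith) hc0
  have hlog_x : log x < x - 1 := log_lt_sub_one_of_pos hx0 hx1.ne
  have hlog_d : log ((c + 1 - x) / c) ≤ (1 - x) / c := by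
    have hsub : (c + 1 - x) / c - 1 = (1 - x) / c := by field_simp; ring
    exact hsub ▸ log_le_sub_one_of_pos hd
  have hratio : γ * ((1 - x) / c) ≤ (1 - γ) * (1 - x) := by
    rw [mul_div_assoc', div_le_iff₀ hc0]
    nlinarith
  have hsplit : x * c / (c + 1 - x) = x / ((c + 1 - x) / c) := (div_div_eq_mul_div _ _ _).symm
  have hy : 0 < x * c / (c + 1 - x) := hsplit ▸ div_pos hx0 hd
  rw [pgssMap, ← log_lt_log_iff hx0 (rpow_pos_of_pos hy γ), log_rpow hy, hsplit,
    log_div hx0.ne' hd.ne']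
  linarith [mul_lt_mul_of_pos_left hlog_x (sub_pos.2 hγ1), mul_le_mul_of_nonneg_left hlog_d hγ0.le]

theorem continuousOn_pgssMap (hγ : 0 ≤ γ) : ContinuousOn (pgssMap γ c) (Iio (c + 1)) :=
  ContinuousOn.rpow_const (ContinuousOn.div (by fun_prop) (by fun_prop)
    fun _ hx => (sub_pos.2 hx).ne') fun _ _ => Or.inr hγ

end pgssMap

theorem pgss_p_tendsto_one_fixed (γ : ℝ) (hγ0 : 0 < γ) (hγ1 : γ < 1)
    (p : ℕ → ℝ)
    (h1 : p 1 = γ ^ γ)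
    (hrec : ∀ t : ℕ, 1 ≤ t →
      p (t + 1) = (p t * (γ * (1 / (1 - γ))) / (γ * (1 / (1 - γ)) + 1 - p t)) ^ γ) :
    Filter.Tendsto p Filter.atTop (nhds 1) := by
  set c := γ * (1 / (1 - γ))
  have hc_eq : c * (1 - γ) = γ := by
    simp only [c]
    field_simp [(sub_pos.2 hγ1).ne']
  have hc0 : 0 < c := by positivity
  have hp1 : p 1 ∈ Ioo 0 1 := h1 ▸ ⟨rpow_pos_of_pos hγ0 γ, rpow_lt_one hγ0.le hγ1 hγ0⟩
  have hshift : Tendsto (fun n => p (n + 1)) atTop (𝓝 1) :=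
    tendsto_right_endpoint_of_lt_map (fun _ => pgssMap_mem_Ioo hγ0 hc0)
      (fun _ => lt_pgssMap hγ0 hγ1 hc_eq.ge)
      ((continuousOn_pgssMap hγ0.le).mono fun _ hx => by simp only [mem_Iio]; linarith [hx.2])
      hp1 fun n => hrec (n + 1) (by omega)
  exact (tendsto_add_atTop_iff_nat 1).mp hshift
end

section
/- Let γ ∈ (0,1) and define p_t(b) by p₁(b) = (γb/(γb+1))^γ and p_t(b) = [ p_{t-1}(γb+1) · γb / (γb + 1 - p_{t-1}(γb+1)) ]^γ. Then for every b₀ > 0, p_t(b₀) → 1 as t → ∞. -/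
/-!
Write `p (t + 1) b = (1 + w t b) ^ (-γ)` with `w = pgssW γ`. In the new unknown the recursion
reads `w (t + 1) b = (b' / b) * Φ (w t b')`, where `b' = γ b + 1` and `Φ = pgssStep γ`, and
`w 0 b = 1 / (γ b)`. By Bernoulli, `0 ≤ Φ u < u` for `u > 0`, so the iterates of `Φ` tend to
`0`; by concavity, `Φ (c u) ≤ c Φ u` for `c ≥ 1`. For any `c ≥ b* = 1 / (1 - γ)` the interval
`(0, c]` is invariant under `b ↦ γ b + 1`, and on it the factors `b' / b` telescope against
`c / b`, giving `w t b ≤ (c / b) Φ^[t] (1 / (γ c))`. Hence `w t b → 0` and `p t b → 1`.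
-/

open Filter Topology Function

theorem tendsto_iterate_nhds_zero_of_lt_self {f : ℝ → ℝ} (hf : Continuous f)
    (hmaps : Set.MapsTo f (Set.Ici 0) (Set.Ici 0)) (hle : ∀ u, 0 ≤ u → f u ≤ u)
    (hlt : ∀ u, 0 < u → f u < u) {x : ℝ} (hx : 0 ≤ x) :
    Tendsto (fun n => f^[n] x) atTop (𝓝 0) := by
  have hiter_nonneg : ∀ n, 0 ≤ f^[n] x := fun n => hmaps.iterate n hx
  have hanti : Antitone fun n => f^[n] x := antitone_nat_of_succ_le fun n => by
    rw [iterate_succ_apply']; exact hle _ (hiter_nonneg n)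
  have hlim := tendsto_atTop_ciInf hanti ⟨0, by rintro _ ⟨n, rfl⟩; exact hiter_nonneg n⟩
  have hfix : f (⨅ n, f^[n] x) = ⨅ n, f^[n] x :=
    isFixedPt_of_tendsto_iterate hlim hf.continuousAt
  have hinf_nonneg : 0 ≤ ⨅ n, f^[n] x := le_ciInf hiter_nonneg
  rcases hinf_nonneg.eq_or_lt with hzero | hpos
  · rwa [← hzero] at hlim
  · exact absurd hfix (hlt _ hpos).ne

theorem one_add_mul_rpow_sub_one_le {γ c u : ℝ} (hγ0 : 0 ≤ γ) (hγ1 : γ ≤ 1) (hc : 1 ≤ c)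
    (hu : 0 ≤ u) : (1 + c * u) ^ γ - 1 ≤ c * ((1 + u) ^ γ - 1) := by
  have hc0 : 0 < c := one_pos.trans_le hc
  -- concavity of `x ^ γ` between `1 + c u` and `1`, with weights `1 / c` and `1 - 1 / c`
  have hconc := (Real.concaveOn_rpow hγ0 hγ1).2 (Set.mem_Ici.2 (by positivity : 0 ≤ 1 + c * u))
    (Set.mem_Ici.2 zero_le_one) (by positivity : 0 ≤ 1 / c)
    (sub_nonneg.2 ((div_le_one hc0).2 hc)) (add_sub_cancel _ _)
  have hmid : 1 / c * (1 + c * u) + (1 - 1 / c) * 1 = 1 + u := by field_simp; ring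
  simp only [smul_eq_mul, Real.one_rpow, hmid] at hconc
  have := mul_le_mul_of_nonneg_left hconc hc0.le
  field_simp at this
  linarith

noncomputable def pgssStep (γ u : ℝ) : ℝ := ((1 + u) ^ γ - 1) / γ

section pgssStep

variable {γ : ℝ}

theorem continuous_pgssStep (hγ0 : 0 ≤ γ) : Continuous (pgssStep γ) :=
  (((Real.continuous_rpow_const hγ0).comp (continuous_const.add continuous_id)).sub
    continuous_const).div_const γ

theorem pgssStep_nonneg (hγ0 : 0 ≤ γ) {u : ℝ} (hu : 0 ≤ u) : 0 ≤ pgssStep γ u :=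
  div_nonneg (sub_nonneg.2 (Real.one_le_rpow (by linarith) hγ0)) hγ0

theorem mapsTo_pgssStep (hγ0 : 0 ≤ γ) : Set.MapsTo (pgssStep γ) (Set.Ici 0) (Set.Ici 0) :=
  fun _ => pgssStep_nonneg hγ0

theorem pgssStep_le_pgssStep (hγ0 : 0 ≤ γ) {u v : ℝ} (hu : -1 ≤ u) (huv : u ≤ v) :
    pgssStep γ u ≤ pgssStep γ v := by
  unfold pgssStep
  gcongr
  linarith

theorem pgssStep_le_self (hγ0 : 0 < γ) (hγ1 : γ ≤ 1) {u : ℝ} (hu : -1 ≤ u) :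
    pgssStep γ u ≤ u := by
  rw [pgssStep, div_le_iff₀ hγ0]
  linarith [rpow_one_add_le_one_add_mul_self hu hγ0.le hγ1]

theorem pgssStep_lt_self (hγ0 : 0 < γ) (hγ1 : γ < 1) {u : ℝ} (hu : 0 < u) :
    pgssStep γ u < u := by
  rw [pgssStep, div_lt_iff₀ hγ0]
  linarith [rpow_one_add_lt_one_add_mul_self (by linarith) hu.ne' hγ0 hγ1]

theorem pgssStep_mul_le (hγ0 : 0 < γ) (hγ1 : γ ≤ 1) {c u : ℝ} (hc : 1 ≤ c) (hu : 0 ≤ u) :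
    pgssStep γ (c * u) ≤ c * pgssStep γ u := by
  rw [pgssStep, pgssStep, mul_div_assoc', div_le_div_iff_of_pos_right hγ0]
  exact one_add_mul_rpow_sub_one_le hγ0.le hγ1 hc hu

theorem tendsto_iterate_pgssStep (hγ0 : 0 < γ) (hγ1 : γ < 1) {x : ℝ} (hx : 0 ≤ x) :
    Tendsto (fun n => (pgssStep γ)^[n] x) atTop (𝓝 0) :=
  tendsto_iterate_nhds_zero_of_lt_self (continuous_pgssStep hγ0.le)
    (mapsTo_pgssStep hγ0.le) (fun _ hu => pgssStep_le_self hγ0 hγ1.le (by linarith))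
    (fun _ => pgssStep_lt_self hγ0 hγ1) hx

end pgssStep

noncomputable def pgssW (γ : ℝ) : ℕ → ℝ → ℝ
  | 0, b => 1 / (γ * b)
  | t + 1, b => (γ * b + 1) / b * pgssStep γ (pgssW γ t (γ * b + 1))

section pgssW

variable {γ : ℝ}

theorem pgssW_nonneg (hγ0 : 0 < γ) (t : ℕ) {b : ℝ} (hb : 0 < b) : 0 ≤ pgssW γ t b := by
  induction t generalizing b with
  | zero => rw [pgssW]; positivity
  | succ t ih =>
    have hb' : 0 < γ * b + 1 := by positivity
    rw [pgssW]
    exact mul_nonneg (by positivity) (pgssStep_nonneg hγ0.le (ih hb'))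

theorem pgssW_le_iterate (hγ0 : 0 < γ) (hγ1 : γ ≤ 1) {c : ℝ} (hc : γ * c + 1 ≤ c) (t : ℕ)
    {b : ℝ} (hb : 0 < b) (hbc : b ≤ c) :
    pgssW γ t b ≤ c / b * (pgssStep γ)^[t] (1 / (γ * c)) := by
  induction t generalizing b with
  | zero =>
    have hc0 : 0 < c := hb.trans_le hbc
    rw [pgssW, iterate_zero_apply]
    exact (by field_simp : 1 / (γ * b) = c / b * (1 / (γ * c))).le
  | succ t ih =>
    set b' := γ * b + 1
    have hb' : 0 < b' := by positivity
    have hb'c : b' ≤ c := by nlinarith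
    have hc0 : 0 < c := hb.trans_le hbc
    have hX : 0 ≤ (pgssStep γ)^[t] (1 / (γ * c)) :=
      (mapsTo_pgssStep hγ0.le).iterate t (by positivity : 0 ≤ 1 / (γ * c))
    calc pgssW γ (t + 1) b = b' / b * pgssStep γ (pgssW γ t b') := by rw [pgssW]
      _ ≤ b' / b * pgssStep γ (c / b' * (pgssStep γ)^[t] (1 / (γ * c))) := by
        gcongr
        exact pgssStep_le_pgssStep hγ0.le (by linarith [pgssW_nonneg hγ0 t hb']) (ih hb' hb'c)
      _ ≤ b' / b * (c / b' * pgssStep γ ((pgssStep γ)^[t] (1 / (γ * c)))) := by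
        gcongr
        exact pgssStep_mul_le hγ0 hγ1 ((one_le_div hb').2 hb'c) hX
      _ = c / b * (pgssStep γ)^[t + 1] (1 / (γ * c)) := by
        rw [iterate_succ_apply']
        field_simp

theorem tendsto_pgssW (hγ0 : 0 < γ) (hγ1 : γ < 1) {b : ℝ} (hb : 0 < b) :
    Tendsto (fun t => pgssW γ t b) atTop (𝓝 0) := by
  set c := max b (1 / (1 - γ))
  have hc : γ * c + 1 ≤ c := by
    have := (div_le_iff₀' (sub_pos.2 hγ1)).1 (le_max_right b (1 / (1 - γ)))
    linarith
  have hc0 : 0 < c := hb.trans_le (le_max_left _ _)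
  have hbound := (tendsto_iterate_pgssStep hγ0 hγ1 (by positivity : 0 ≤ 1 / (γ * c))).const_mul
    (c / b)
  rw [mul_zero] at hbound
  exact tendsto_of_tendsto_of_tendsto_of_le_of_le tendsto_const_nhds hbound
    (fun t => pgssW_nonneg hγ0 t hb)
    (fun t => pgssW_le_iterate hγ0 hγ1.le hc t hb (le_max_left _ _))

end pgssW

theorem rpow_eq_inv_rpow_neg {x : ℝ} (hx : 0 ≤ x) (y : ℝ) : x ^ y = x⁻¹ ^ (-y) := by
  rw [Real.rpow_neg (inv_nonneg.2 hx), Real.inv_rpow hx, inv_inv]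

theorem pgss_p_succ_eq {γ : ℝ} (hγ0 : 0 < γ) (p : ℕ → ℝ → ℝ)
    (h1 : ∀ b : ℝ, 0 < b → p 1 b = (γ * b / (γ * b + 1)) ^ γ)
    (hrec : ∀ t : ℕ, 1 ≤ t → ∀ b : ℝ, 0 < b →
      p (t + 1) b = (p t (γ * b + 1) * (γ * b) / (γ * b + 1 - p t (γ * b + 1))) ^ γ)
    (t : ℕ) {b : ℝ} (hb : 0 < b) : p (t + 1) b = (1 + pgssW γ t b) ^ (-γ) := by
  induction t generalizing b with
  | zero =>
    rw [h1 b hb, rpow_eq_inv_rpow_neg (by positivity), pgssW]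
    congr 1
    field_simp
  | succ t ih =>
    set b' := γ * b + 1
    have hb' : 0 < b' := by positivity
    set y := (1 + pgssW γ t b') ^ γ
    have hw : 1 ≤ 1 + pgssW γ t b' := le_add_of_nonneg_right (pgssW_nonneg hγ0 t hb')
    have hy : 1 ≤ y := Real.one_le_rpow hw hγ0.le
    have hq : p (t + 1) b' = y⁻¹ := by rw [ih hb', Real.rpow_neg (zero_le_one.trans hw)]
    rw [hrec (t + 1) le_add_self b hb, hq, rpow_eq_inv_rpow_neg, pgssW, pgssStep]
    · congr 1
      field_simp
      simp only [y, b']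
      ring
    · have : y⁻¹ ≤ 1 := inv_le_one_of_one_le₀ hy
      exact div_nonneg (by positivity) (by nlinarith)

theorem pgss_p_tendsto_one (γ : ℝ) (hγ0 : 0 < γ) (hγ1 : γ < 1)
    (p : ℕ → ℝ → ℝ)
    (h1 : ∀ b : ℝ, 0 < b → p 1 b = (γ * b / (γ * b + 1)) ^ γ)
    (hrec : ∀ t : ℕ, 1 ≤ t → ∀ b : ℝ, 0 < b →
      p (t + 1) b = (p t (γ * b + 1) * (γ * b) / (γ * b + 1 - p t (γ * b + 1))) ^ γ) :
    ∀ b0 : ℝ, 0 < b0 → Filter.Tendsto (fun t => p t b0) Filter.atTop (nhds 1) := by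
  intro b0 hb0
  have hlim : Tendsto (fun t => (1 + pgssW γ t b0) ^ (-γ)) atTop (𝓝 1) := by
    have h1w : Tendsto (fun t => 1 + pgssW γ t b0) atTop (𝓝 1) := by
      simpa using (tendsto_pgssW hγ0 hγ1 hb0).const_add 1
    simpa using h1w.rpow_const (p := -γ) (Or.inl one_ne_zero)
  rw [← tendsto_add_atTop_iff_nat 1]
  exact hlim.congr fun t => (pgss_p_succ_eq hγ0 p h1 hrec t hb0).symm
end

section
/- Let γ ∈ (0,1) and b* = 1/(1-γ), and let c = γ^{γ/(1-γ)}. For every p ∈ [c, 1), we have [ p · γb*/(γb* + 1 - p) ]^γ > p; equivalently, p^{γ-1} · (γb*)^γ > (γb* + 1 - p)^γ. -/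
/-!
With `b = 1 / (1 - γ)`, so that `γ b + 1 = b`, put `x = p γ b / (γ b + 1 - p)`. For `0 < p < 1`
one has `0 < x < 1` and, exactly, `1 + γ (1/x - 1) = 1/p`. Strict concavity of `t ↦ t ^ γ`
(Bernoulli's inequality) gives `(1/x) ^ γ < 1 + γ (1/x - 1) = 1/p`, i.e. `p < x ^ γ`. The second
inequality is the first one with the powers multiplied out.
-/

open Real

theorem lt_rpow_of_one_add_mul_inv_sub_one_eq_inv {γ x p : ℝ} (hγ0 : 0 < γ) (hγ1 : γ < 1)
    (hx0 : 0 < x) (hx1 : x < 1) (h : 1 + γ * (x⁻¹ - 1) = p⁻¹) : p < x ^ γ := by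
  have hx_inv : 1 < x⁻¹ := (one_lt_inv₀ hx0).2 hx1
  have hbernoulli : (x⁻¹) ^ γ < p⁻¹ := by
    simpa [h] using rpow_one_add_lt_one_add_mul_self (s := x⁻¹ - 1) (by linarith)
      (by linarith) hγ0 hγ1
  have hp0 : 0 < p := inv_pos.1 (h ▸ by nlinarith)
  rwa [inv_rpow hx0.le, inv_lt_inv₀ (rpow_pos_of_pos hx0 γ) hp0] at hbernoulli

theorem lt_rpow_mul_div_of_mul_add_one_eq {γ b p : ℝ} (hγ0 : 0 < γ) (hγ1 : γ < 1)
    (hb : γ * b + 1 = b) (hp0 : 0 < p) (hp1 : p < 1) :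
    p < (p * (γ * b) / (γ * b + 1 - p)) ^ γ := by
  have hb0 : 0 < b := by nlinarith
  have hd : 0 < γ * b + 1 - p := by nlinarith
  apply lt_rpow_of_one_add_mul_inv_sub_one_eq_inv hγ0 hγ1 (by positivity)
  · rw [div_lt_one hd]
    nlinarith
  · rw [inv_div]
    field_simp
    linear_combination (1 - p) * hb

theorem lt_rpow_mul_div_iff {γ p a d : ℝ} (hp : 0 < p) (ha : 0 ≤ a) (hd : 0 < d) :
    p < (p * a / d) ^ γ ↔ d ^ γ < p ^ (γ - 1) * a ^ γ := by
  rw [div_rpow (by positivity) hd.le, mul_rpow hp.le ha, lt_div_iff₀ (rpow_pos_of_pos hd γ),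
    rpow_sub_one hp.ne', div_mul_eq_mul_div, lt_div_iff₀ hp, mul_comm]

theorem pgss_strict_ineq (γ : ℝ) (hγ0 : 0 < γ) (hγ1 : γ < 1) :
    ∀ p : ℝ, p ∈ Set.Ico (γ ^ (γ / (1 - γ))) 1 →
      (p * (γ * (1 / (1 - γ))) / (γ * (1 / (1 - γ)) + 1 - p)) ^ γ > p ∧
      p ^ (γ - 1) * (γ * (1 / (1 - γ))) ^ γ > (γ * (1 / (1 - γ)) + 1 - p) ^ γ := by
  rintro p ⟨hcp, hp1⟩
  have hp0 : 0 < p := (rpow_pos_of_pos hγ0 _).trans_le hcp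
  have hb : γ * (1 / (1 - γ)) + 1 = 1 / (1 - γ) := by
    field_simp [(sub_pos.2 hγ1).ne']
    ring
  have hfirst := lt_rpow_mul_div_of_mul_add_one_eq hγ0 hγ1 hb hp0 hp1
  have hd : 0 < γ * (1 / (1 - γ)) + 1 - p := by
    rw [hb, sub_pos, lt_div_iff₀ (sub_pos.2 hγ1)]
    nlinarith
  exact ⟨hfirst, (lt_rpow_mul_div_iff hp0 (by positivity) hd).1 hfirst⟩
end

section
/- Let γ ∈ (0,1) and let p_t(b) satisfy p₁(b) = (γb/(γb+1))^γ and p_t(b) = [ p_{t-1}(γb+1) · γb/(γb + 1 - p_{t-1}(γb+1)) ]^γ, with 0 < p_t(b) < 1. If p_t(b)/p_{t-1}(b) ≥ 1 for all b > 0, then p_{t+1}(b)/p_t(b) = [ (p_t(b₁)/p_{t-1}(b₁)) · (γb + 1 - p_{t-1}(b₁))/(γb + 1 - p_t(b₁)) ]^γ ≥ 1 for all b > 0, where b₁ = γb + 1. -/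
/-!
With `b₁ = γ b + 1` and `c = γ b`, the recursion writes `p_{t+1}(b)` as `f(p_t(b₁))^γ` for
`f(x) = c x / (b₁ - x)`. Hence `p_{t+2}(b) / p_{t+1}(b) = (f(B) / f(A))^γ` with `A = p_t(b₁)`,
`B = p_{t+1}(b₁)`, which is the claimed factorisation; both factors are `≥ 1` because
`A ≤ B < 1 < b₁` by the inductive hypothesis and the bound `p < 1`.
-/

section RecursionStep

variable {s A B : ℝ}

lemma rpow_mul_div_sub_div_rpow_mul_div_sub (γ : ℝ) {c : ℝ} (hc : 0 < c) (hA : 0 < A)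
    (hB : 0 ≤ B) (hAs : A < s) (hBs : B < s) :
    (B * c / (s - B)) ^ γ / (A * c / (s - A)) ^ γ = (B / A * ((s - A) / (s - B))) ^ γ := by
  have hsA : 0 < s - A := sub_pos.mpr hAs
  have hsB : 0 < s - B := sub_pos.mpr hBs
  rw [← Real.div_rpow (by positivity) (by positivity)]
  congr 1
  field_simp

lemma one_le_div_mul_sub_div_sub (hA : 0 < A) (hAB : A ≤ B) (hBs : B < s) :
    1 ≤ B / A * ((s - A) / (s - B)) := by
  have hB : 1 ≤ B / A := (one_le_div hA).mpr hAB
  have hsAB : 1 ≤ (s - A) / (s - B) := (one_le_div (sub_pos.mpr hBs)).mpr (by linarith)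
  exact one_le_mul_of_one_le_of_one_le hB hsAB

end RecursionStep

theorem pgss_mono_t_step_general (γ : ℝ) (hγ0 : 0 < γ)
    (p : ℕ → ℝ → ℝ)
    (hrec : ∀ t : ℕ, 1 ≤ t → ∀ b : ℝ, 0 < b →
      p (t + 1) b = (p t (γ * b + 1) * (γ * b) / (γ * b + 1 - p t (γ * b + 1))) ^ γ)
    (hbound : ∀ t : ℕ, 1 ≤ t → ∀ b : ℝ, 0 < b → 0 < p t b ∧ p t b < 1)
    (t : ℕ) (ht : 1 ≤ t)
    (hInd : ∀ b : ℝ, 0 < b → p (t + 1) b / p t b ≥ 1) :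
    ∀ b : ℝ, 0 < b →
      p (t + 2) b / p (t + 1) b
        = ((p (t + 1) (γ * b + 1) / p t (γ * b + 1)) *
            ((γ * b + 1 - p t (γ * b + 1)) / (γ * b + 1 - p (t + 1) (γ * b + 1)))) ^ γ ∧
      p (t + 2) b / p (t + 1) b ≥ 1 := by
  intro b hb
  have hγb : 0 < γ * b := mul_pos hγ0 hb
  have hb₁ : 0 < γ * b + 1 := by linarith
  obtain ⟨hA, hA₁⟩ := hbound t ht (γ * b + 1) hb₁
  obtain ⟨hB, hB₁⟩ := hbound (t + 1) (by omega) (γ * b + 1) hb₁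
  have hAB : p t (γ * b + 1) ≤ p (t + 1) (γ * b + 1) := (one_le_div hA).mp (hInd _ hb₁)
  have hratio : p (t + 2) b / p (t + 1) b
      = ((p (t + 1) (γ * b + 1) / p t (γ * b + 1)) *
          ((γ * b + 1 - p t (γ * b + 1)) / (γ * b + 1 - p (t + 1) (γ * b + 1)))) ^ γ := by
    rw [hrec (t + 1) (by omega) b hb, hrec t ht b hb]
    exact rpow_mul_div_sub_div_rpow_mul_div_sub γ hγb hA hB.le (by linarith) (by linarith)
  refine ⟨hratio, ?_⟩
  rw [hratio]
  exact Real.one_le_rpow (one_le_div_mul_sub_div_sub hA hAB (by linarith)) hγ0.le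

theorem pgss_mono_t_step (γ : ℝ) (hγ0 : 0 < γ) (hγ1 : γ < 1)
    (p : ℕ → ℝ → ℝ)
    (h1 : ∀ b : ℝ, 0 < b → p 1 b = (γ * b / (γ * b + 1)) ^ γ)
    (hrec : ∀ t : ℕ, 1 ≤ t → ∀ b : ℝ, 0 < b →
      p (t + 1) b = (p t (γ * b + 1) * (γ * b) / (γ * b + 1 - p t (γ * b + 1))) ^ γ)
    (hbound : ∀ t : ℕ, 1 ≤ t → ∀ b : ℝ, 0 < b → 0 < p t b ∧ p t b < 1)
    (t : ℕ) (ht : 1 ≤ t)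
    (hInd : ∀ b : ℝ, 0 < b → p (t + 1) b / p t b ≥ 1) :
    ∀ b : ℝ, 0 < b →
      p (t + 2) b / p (t + 1) b
        = ((p (t + 1) (γ * b + 1) / p t (γ * b + 1)) *
            ((γ * b + 1 - p t (γ * b + 1)) / (γ * b + 1 - p (t + 1) (γ * b + 1)))) ^ γ ∧
      p (t + 2) b / p (t + 1) b ≥ 1 :=
  pgss_mono_t_step_general γ hγ0 p hrec hbound t ht hInd
end

section
/- For all γ ∈ (0,1) and any b₀ > 0, with b₁ = γb₀ + 1, the inequality (γb₁/(γb₁+1))^γ ≥ b₁/(b₁+1) holds; i.e., the function f(b) = γ·log(γb) - γ·log(γb+1) - log(b) + log(b+1) is nonnegative for all b ≥ 1. -/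
lemma pgss_key (γ : ℝ) (hγ0 : 0 < γ) (hγ1 : γ < 1) (b : ℝ) (hb : 0 < b) :
    γ * Real.log (γ * b) - γ * Real.log (γ * b + 1) - Real.log b + Real.log (b + 1) ≥ 0 := by
  have hgb : 0 < γ * b := by positivity
  have hgb1 : 0 < γ * b + 1 := by linarith
  have hb1 : 0 < b + 1 := by linarith
  set x : ℝ := (γ * b + 1) / (γ * b) with hxdef
  have hx : 0 < x := by positivity
  have hc := strictConcaveOn_log_Ioi.concaveOn.2 (Set.mem_Ioi.mpr hx)
      (Set.mem_Ioi.mpr one_pos) (le_of_lt hγ0) (by linarith : (0:ℝ) ≤ 1 - γ) (by ring)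
  have hcomb : γ • x + (1 - γ) • (1:ℝ) = (b + 1) / b := by
    simp only [smul_eq_mul, hxdef]
    field_simp
    ring
  rw [hcomb, Real.log_one, smul_zero, add_zero] at hc
  have hlogx : Real.log x = Real.log (γ * b + 1) - Real.log (γ * b) :=
    Real.log_div (by positivity) (by positivity)
  have hlogb : Real.log ((b + 1) / b) = Real.log (b + 1) - Real.log b :=
    Real.log_div (by positivity) (by positivity)
  rw [hlogx, hlogb, smul_eq_mul] at hc
  nlinarith [hc]

theorem pgss_log_inequality (γ : ℝ) (hγ0 : 0 < γ) (hγ1 : γ < 1) :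
    (∀ b : ℝ, 1 ≤ b →
      γ * Real.log (γ * b) - γ * Real.log (γ * b + 1) - Real.log b + Real.log (b + 1) ≥ 0) ∧
    (∀ b0 : ℝ, 0 < b0 →
      (γ * (γ * b0 + 1) / (γ * (γ * b0 + 1) + 1)) ^ γ ≥ (γ * b0 + 1) / ((γ * b0 + 1) + 1)) := by
  constructor
  · intro b hb
    exact pgss_key γ hγ0 hγ1 b (by linarith)
  · intro b0 hb0
    set b : ℝ := γ * b0 + 1 with hbdef
    have hb : 0 < b := by positivity
    have hgb : 0 < γ * b := by positivity
    have hgb1 : 0 < γ * b + 1 := by linarith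
    have hb1 : 0 < b + 1 := by linarith
    have hkey := pgss_key γ hγ0 hγ1 b hb
    rw [ge_iff_le, Real.le_rpow_iff_log_le (by positivity) (by positivity)]
    rw [Real.log_div (by positivity) (by positivity),
        Real.log_div (by positivity) (by positivity)]
    nlinarith [hkey]
end
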